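/- arXiv:1501.05475 — 2 statements merged into one kernel-verified Lean document; each statement's English description precedes it below -/
import Mathlib

section
/- Let G be a map (possibly with contractible loops or double edges) on an orientable surface of genus g with a fixed reference orientation, and let β(p,d) = Σ_{e∈G} p_e d_{e*} for flows p on G and d on the dual G*. Fix closed walks B*_1,…,B*_{2g} of G* forming a basis for the homology. Then for flows φ, φ' on G, the following are equivalent: (1) φ - φ' lies in the subgroup F generated by counterclockwise facial walks of G; (2) β(φ,W) = β(φ',W) for every closed walk W of G*; (3) β(φ,F) = β(φ',F) for every counterclockwise facial walk F of G* and β(φ,B*_i) = β(φ',B*_i) for all 1 ≤ i ≤ 2g. -/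
/-!
Combinatorial framework for flows and homology on a map on an orientable surface.

* A `Multigraph` is a set of edges with a fixed reference orientation (source/target);
  flows on it are elements of ℤ^E.
* A dart is an edge together with a direction of traversal (`true` = forward).
* `charFlow l` is the characteristic flow of a list of darts (a walk):
  #forward traversals − #backward traversals of each edge.
* `beta p q = Σ_e p_e q_{e*}` is the pairing between flows on G and flows on its dual G*
  (dual flows are indexed by the same edge set via e ↦ e*).
* A `SurfaceMap` records, for each edge, the faces on its left and right, and for each
  face its counterclockwise facial walk; the dual graph G* has the faces as vertices and
  e* oriented from the face on the right of e to the face on the left.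
* `GoodFacialWalks` is the defining geometric property of the ccw facial walks:
  the ccw facial walk of a face f uses e forward iff f is on the left of e.
* Two flows are homologous iff their difference lies in the subgroup generated by the
  characteristic flows of the ccw facial walks.
-/

structure Multigraph (V E : Type) where
  src : E → V
  tgt : E → V

namespace Multigraph

variable {V E : Type}

def dtail (M : Multigraph V E) (d : E × Bool) : V := if d.2 then M.src d.1 else M.tgt d.1

def dhead (M : Multigraph V E) (d : E × Bool) : V := if d.2 then M.tgt d.1 else M.src d.1

/-- A closed walk: a nonempty list of darts, consecutively chained, wrapping around. -/
def IsClosedWalk (M : Multigraph V E) (l : List (E × Bool)) : Prop :=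
  l ≠ [] ∧ l.Chain' (fun d d' => M.dhead d = M.dtail d') ∧
    ∀ d ∈ l.head?, ∀ d' ∈ l.getLast?, M.dhead d' = M.dtail d

end Multigraph

/-- Characteristic flow of a walk (list of darts). -/
def charFlow {E : Type} [DecidableEq E] (l : List (E × Bool)) : E → ℤ :=
  fun e => (l.count (e, true) : ℤ) - (l.count (e, false) : ℤ)

/-- The bilinear pairing β between flows of G and flows of G*. -/
def beta {E : Type} [Fintype E] (p q : E → ℤ) : ℤ := ∑ e, p e * q e

structure SurfaceMap (V E F : Type) where
  G : Multigraph V E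
  leftFace : E → F
  rightFace : E → F
  /-- the counterclockwise facial walk of each face -/
  facialWalk : F → List (E × Bool)

namespace SurfaceMap

variable {V E F : Type}

/-- The dual map G*: vertices are the faces of G, and e* goes from the face on the
right of e to the face on the left of e. -/
def dual (M : SurfaceMap V E F) : Multigraph F E := ⟨M.rightFace, M.leftFace⟩

/-- The subgroup 𝔽 of ℤ^E generated by the ccw facial flows. -/
def FacialSubgroup [DecidableEq E] (M : SurfaceMap V E F) : AddSubgroup (E → ℤ) :=
  AddSubgroup.closure (Set.range fun f => charFlow (M.facialWalk f))

/-- Two flows are homologous iff their difference lies in 𝔽. -/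
def Homologous [DecidableEq E] (M : SurfaceMap V E F) (p q : E → ℤ) : Prop :=
  p - q ∈ M.FacialSubgroup

/-- Geometric defining property of the ccw facial walks. -/
def GoodFacialWalks [DecidableEq E] [DecidableEq F] (M : SurfaceMap V E F) : Prop :=
  (∀ f, M.G.IsClosedWalk (M.facialWalk f)) ∧
  ∀ f e, charFlow (M.facialWalk f) e =
    (if M.leftFace e = f then 1 else 0) - (if M.rightFace e = f then 1 else 0)

end SurfaceMap

/-!
Read in the dual map, the ccw facial flow of a face `f` of G is the coboundary of the indicator of
the vertex `f` of G*, and the pairing of a coboundary `δλ` with a walk of G* telescopes to the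
difference of `λ` at its endpoints; so 𝔽 pairs to zero with every closed walk of G*. Conversely,
a flow `p` pairing to zero with every closed walk of G* pairs equally with any two walks of G*
sharing endpoints, so pairing `p` with walks from a fixed root in each component gives a potential
`λ` on the faces with `p = δλ = Σ_f λ_f · (facial flow of f)`.
-/

open Matrix

theorem beta_eq_beta_iff {E : Type} [Fintype E] {p q r : E → ℤ} :
    beta p r = beta q r ↔ (p - q) ⬝ᵥ r = 0 := by
  rw [sub_dotProduct, sub_eq_zero]; rfl

theorem charFlow_nil {E : Type} [DecidableEq E] : charFlow ([] : List (E × Bool)) = 0 := by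
  funext e; simp [charFlow]

theorem charFlow_cons {E : Type} [DecidableEq E] (d : E × Bool) (l : List (E × Bool)) :
    charFlow (d :: l) = Pi.single d.1 (if d.2 then 1 else -1) + charFlow l := by
  funext e
  rcases eq_or_ne d.1 e with rfl | h
  · rcases d with ⟨a, _ | _⟩ <;> simp [charFlow] <;> ring
  · simp [charFlow, h, Prod.ext_iff]

theorem charFlow_append {E : Type} [DecidableEq E] (l l' : List (E × Bool)) :
    charFlow (l ++ l') = charFlow l + charFlow l' := by
  funext e; simp only [charFlow, List.count_append, Pi.add_apply]; push_cast; ring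

def reverseWalk {E : Type} (l : List (E × Bool)) : List (E × Bool) :=
  (l.map (Prod.map id not)).reverse

theorem charFlow_reverseWalk {E : Type} [DecidableEq E] (l : List (E × Bool)) :
    charFlow (reverseWalk l) = -charFlow l := by
  have hinj : Function.Injective (Prod.map id not : E × Bool → E × Bool) :=
    Function.injective_id.prodMap Bool.not_injective
  funext e
  have hflip (b : Bool) : (l.map (Prod.map id not)).count (e, b) = l.count (e, !b) := by
    simpa using List.count_map_of_injective l _ hinj (e, !b)
  simp only [charFlow, reverseWalk, List.count_reverse, hflip, Pi.neg_apply]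
  simp

namespace Multigraph

variable {V E : Type} (N : Multigraph V E)

def IsWalk : V → List (E × Bool) → V → Prop
  | u, [], v => u = v
  | u, d :: l, v => N.dtail d = u ∧ IsWalk (N.dhead d) l v

def coboundary (lam : V → ℤ) : E → ℤ := fun e => lam (N.tgt e) - lam (N.src e)

variable {N}

theorem isWalk_cons_iff {u v : V} {d : E × Bool} {l : List (E × Bool)} :
    N.IsWalk u (d :: l) v ↔ N.dtail d = u ∧ (d :: l).IsChain (fun a b => N.dhead a = N.dtail b) ∧
      N.dhead ((d :: l).getLast (List.cons_ne_nil d l)) = v := by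
  induction l generalizing u d with
  | nil => simp [IsWalk]
  | cons d' l ih =>
    rw [IsWalk, ih]
    simp only [List.getLast_cons_cons, List.isChain_cons_cons]
    tauto

theorem IsWalk.single (d : E × Bool) : N.IsWalk (N.dtail d) [d] (N.dhead d) := ⟨rfl, rfl⟩

theorem IsWalk.append {u v w : V} {l l' : List (E × Bool)} (h : N.IsWalk u l v)
    (h' : N.IsWalk v l' w) : N.IsWalk u (l ++ l') w := by
  induction l generalizing u with
  | nil => cases h; exact h'
  | cons d l ih => exact ⟨h.1, ih h.2⟩

theorem IsWalk.reverseWalk {u v : V} {l : List (E × Bool)} (h : N.IsWalk u l v) :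
    N.IsWalk v (_root_.reverseWalk l) u := by
  induction l generalizing u with
  | nil => cases h; rfl
  | cons d l ih =>
    obtain ⟨rfl, h⟩ := h
    have hd : N.IsWalk (N.dhead d) [Prod.map id not d] (N.dtail d) := by
      rcases d with ⟨e, _ | _⟩ <;> exact IsWalk.single _
    simpa [_root_.reverseWalk] using (ih h).append hd

theorem IsWalk.isClosedWalk {u : V} {l : List (E × Bool)} (h : N.IsWalk u l u) (hl : l ≠ []) :
    N.IsClosedWalk l := by
  obtain ⟨d, l, rfl⟩ := List.exists_cons_of_ne_nil hl
  obtain ⟨htail, hchain, hhead⟩ := isWalk_cons_iff.mp h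
  refine ⟨hl, hchain, ?_⟩
  simp [List.getLast?_eq_some_getLast, hhead, htail]

theorem IsClosedWalk.exists_isWalk {l : List (E × Bool)} (h : N.IsClosedWalk l) :
    ∃ u, N.IsWalk u l u := by
  obtain ⟨hl, hchain, hclose⟩ := h
  obtain ⟨d, l, rfl⟩ := List.exists_cons_of_ne_nil hl
  refine ⟨N.dtail d, isWalk_cons_iff.mpr ⟨rfl, hchain, ?_⟩⟩
  exact hclose d rfl _ (List.getLast?_eq_some_getLast _)

variable [Fintype E]

theorem coboundary_mem_closure [DecidableEq V] (lam : V → ℤ) :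
    N.coboundary lam ∈ AddSubgroup.closure (Set.range fun x => N.coboundary (Pi.single x 1)) := by
  let S := Finset.univ.image N.src ∪ Finset.univ.image N.tgt
  have hsum : N.coboundary lam = ∑ x ∈ S, lam x • N.coboundary (Pi.single x 1) := by
    funext e
    simp [S, coboundary, Finset.sum_apply, Pi.single_apply, mul_sub, Finset.sum_sub_distrib]
  rw [hsum]
  exact AddSubgroup.sum_mem _ fun x _ =>
    AddSubgroup.zsmul_mem _ (AddSubgroup.subset_closure (Set.mem_range_self x)) _

variable [DecidableEq E] {p : E → ℤ}

theorem coboundary_dotProduct_charFlow_of_isWalk (lam : V → ℤ) {u v : V}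
    {l : List (E × Bool)} (h : N.IsWalk u l v) :
    N.coboundary lam ⬝ᵥ charFlow l = lam v - lam u := by
  induction l generalizing u with
  | nil => cases h; simp [charFlow_nil]
  | cons d l ih =>
    obtain ⟨rfl, h⟩ := h
    rcases d with ⟨e, _ | _⟩ <;>
      simp [charFlow_cons, dotProduct_add, ih h, coboundary, dhead, dtail]

theorem coboundary_dotProduct_charFlow_eq_zero (lam : V → ℤ) {l : List (E × Bool)}
    (hl : N.IsClosedWalk l) : N.coboundary lam ⬝ᵥ charFlow l = 0 := by
  obtain ⟨u, hu⟩ := hl.exists_isWalk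
  rw [coboundary_dotProduct_charFlow_of_isWalk lam hu, sub_self]

theorem dotProduct_charFlow_eq_zero_of_isWalk
    (hp : ∀ W, N.IsClosedWalk W → p ⬝ᵥ charFlow W = 0) {u : V} {l : List (E × Bool)}
    (h : N.IsWalk u l u) : p ⬝ᵥ charFlow l = 0 := by
  rcases eq_or_ne l [] with rfl | hl
  · simp [charFlow_nil]
  · exact hp l (h.isClosedWalk hl)

theorem dotProduct_charFlow_eq_of_isWalk
    (hp : ∀ W, N.IsClosedWalk W → p ⬝ᵥ charFlow W = 0) {u v : V} {l l' : List (E × Bool)}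
    (h : N.IsWalk u l v) (h' : N.IsWalk u l' v) : p ⬝ᵥ charFlow l = p ⬝ᵥ charFlow l' := by
  have := dotProduct_charFlow_eq_zero_of_isWalk hp (h.append h'.reverseWalk)
  rwa [charFlow_append, charFlow_reverseWalk, dotProduct_add, dotProduct_neg,
    add_neg_eq_zero] at this

theorem exists_eq_coboundary (hp : ∀ W, N.IsClosedWalk W → p ⬝ᵥ charFlow W = 0) :
    ∃ lam : V → ℤ, p = N.coboundary lam := by
  let reach : Setoid V :=
    ⟨fun u v => ∃ l, N.IsWalk u l v,
      ⟨fun u => ⟨[], rfl⟩, fun ⟨l, h⟩ => ⟨_, h.reverseWalk⟩, fun ⟨l, h⟩ ⟨l', h'⟩ => ⟨_, h.append h'⟩⟩⟩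
  choose walk hwalk using fun v => Quotient.exact (Quotient.out_eq (Quotient.mk reach v))
  refine ⟨fun v => p ⬝ᵥ charFlow (walk v), funext fun e => ?_⟩
  have hroot : (Quotient.mk reach (N.src e)).out = (Quotient.mk reach (N.tgt e)).out :=
    congrArg Quotient.out (Quotient.sound ⟨[(e, true)], IsWalk.single (e, true)⟩)
  have := dotProduct_charFlow_eq_of_isWalk hp ((hwalk (N.src e)).append (IsWalk.single (e, true)))
    (hroot ▸ hwalk (N.tgt e))
  rw [charFlow_append, charFlow_cons, charFlow_nil, dotProduct_add] at this
  simp [coboundary, ← this]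

theorem mem_closure_coboundary_single_iff [DecidableEq V] :
    p ∈ AddSubgroup.closure (Set.range fun x => N.coboundary (Pi.single x 1)) ↔
      ∀ W, N.IsClosedWalk W → p ⬝ᵥ charFlow W = 0 := by
  constructor
  · intro hp W hW
    let pairing : (E → ℤ) →+ ℤ := AddMonoidHom.mk' (· ⬝ᵥ charFlow W) fun a b => add_dotProduct a b _
    suffices AddSubgroup.closure (Set.range fun x => N.coboundary (Pi.single x 1)) ≤ pairing.ker from
      this hp
    rw [AddSubgroup.closure_le]
    rintro _ ⟨x, rfl⟩
    exact coboundary_dotProduct_charFlow_eq_zero _ hW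
  · intro hp
    obtain ⟨lam, rfl⟩ := exists_eq_coboundary hp
    exact coboundary_mem_closure lam

end Multigraph

namespace SurfaceMap

variable {V E F : Type} [DecidableEq E] [DecidableEq F] {M : SurfaceMap V E F}

theorem charFlow_facialWalk (hM : M.GoodFacialWalks) (f : F) :
    charFlow (M.facialWalk f) = M.dual.coboundary (Pi.single f 1) := by
  funext e
  simp [hM.2 f e, Multigraph.coboundary, dual, Pi.single_apply]

theorem homologous_iff [Fintype E] (hM : M.GoodFacialWalks) {φ φ' : E → ℤ} :
    M.Homologous φ φ' ↔ ∀ W, M.dual.IsClosedWalk W → (φ - φ') ⬝ᵥ charFlow W = 0 := by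
  rw [Homologous, FacialSubgroup, funext (charFlow_facialWalk hM)]
  exact Multigraph.mem_closure_coboundary_single_iff

end SurfaceMap

theorem homologous_tfae_general {V E F : Type} [Fintype V] [Fintype E] [DecidableEq E] [DecidableEq F]
    (g : ℕ) (M : SurfaceMap V E F) (hM : M.GoodFacialWalks)
    (dualFacialWalk : V → List (E × Bool))
    (hdfc : ∀ v, M.dual.IsClosedWalk (dualFacialWalk v))
    (Bstar : Fin (2 * g) → List (E × Bool))
    (hBc : ∀ i, M.dual.IsClosedWalk (Bstar i))
    (hbasis : ∀ W, M.dual.IsClosedWalk W → ∃ (lam : V → ℤ) (mu : Fin (2 * g) → ℤ),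
      charFlow W = (∑ v, lam v • charFlow (dualFacialWalk v)) + ∑ i, mu i • charFlow (Bstar i))
    (φ φ' : E → ℤ) :
    List.TFAE [
      M.Homologous φ φ',
      ∀ W, M.dual.IsClosedWalk W → beta φ (charFlow W) = beta φ' (charFlow W),
      (∀ v, beta φ (charFlow (dualFacialWalk v)) = beta φ' (charFlow (dualFacialWalk v))) ∧
        ∀ i, beta φ (charFlow (Bstar i)) = beta φ' (charFlow (Bstar i))] := by
  simp only [beta_eq_beta_iff]
  tfae_have 1 ↔ 2 := SurfaceMap.homologous_iff hM
  tfae_have 2 → 3 := fun h => ⟨fun v => h _ (hdfc v), fun i => h _ (hBc i)⟩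
  tfae_have 3 → 2 := by
    rintro ⟨hfacial, hB⟩ W hW
    obtain ⟨lam, mu, hW⟩ := hbasis W hW
    simp only [hW, dotProduct_add, dotProduct_sum, dotProduct_smul, hfacial, hB, smul_zero,
      Finset.sum_const_zero, add_zero]
  tfae_finish

theorem homologous_tfae {V E F : Type} [Fintype V] [Fintype E] [DecidableEq E] [DecidableEq F]
    [DecidableEq V]
    (g : ℕ) (M : SurfaceMap V E F) (hM : M.GoodFacialWalks)
    (dualFacialWalk : V → List (E × Bool))
    (hdfc : ∀ v, M.dual.IsClosedWalk (dualFacialWalk v))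
    (hdff : ∀ v e, charFlow (dualFacialWalk v) e =
      (if M.G.src e = v then 1 else 0) - (if M.G.tgt e = v then 1 else 0))
    (Bstar : Fin (2 * g) → List (E × Bool))
    (hBc : ∀ i, M.dual.IsClosedWalk (Bstar i))
    (hbasis : ∀ W, M.dual.IsClosedWalk W → ∃ (lam : V → ℤ) (mu : Fin (2 * g) → ℤ),
      charFlow W = (∑ v, lam v • charFlow (dualFacialWalk v)) + ∑ i, mu i • charFlow (Bstar i))
    (φ φ' : E → ℤ) :
    List.TFAE [
      M.Homologous φ φ',
      ∀ W, M.dual.IsClosedWalk W → beta φ (charFlow W) = beta φ' (charFlow W),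
      (∀ v, beta φ (charFlow (dualFacialWalk v)) = beta φ' (charFlow (dualFacialWalk v))) ∧
        ∀ i, beta φ (charFlow (Bstar i)) = beta φ' (charFlow (Bstar i))] :=
  homologous_tfae_general g M hM dualFacialWalk hdfc Bstar hBc hbasis φ φ'
end

section
/- An edge e of G is non-rigid with respect to O(G,D_0) (i.e. not oriented the same way in all orientations homologous to D_0) if and only if e is contained in some 0-homologous oriented subgraph of D_0, if and only if for every D ∈ O(G,D_0), e is contained in some 0-homologous oriented subgraph of D. -/
def diffFlow {E : Type} (ρ ρ' : E → Bool) : E → ℤ :=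
  fun e => if ρ e = ρ' e then 0 else if ρ e then 1 else -1

/--  is non-rigid w.r.t. O(G,D₀): some orientation homologous to D₀ orients 
differently from D₀. -/
def NonRigid {V E F : Type} [DecidableEq E] (M : SurfaceMap V E F) (D0 : E → Bool)
    (e : E) : Prop :=
  ∃ ρ : E → Bool, diffFlow ρ D0 ∈ M.FacialSubgroup ∧ ρ e ≠ D0 e

/-- T is a 0-homologous oriented subgraph of the orientation ρ: a subgraph of G taken
with ρ's orientation whose characteristic flow lies in the group generated by the ccw
facial flows. -/
def ZeroHomSubgraphOf {V E F : Type} [DecidableEq E] (M : SurfaceMap V E F)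
    (ρ : E → Bool) (T : E → ℤ) : Prop :=
  (∀ e, T e = 0 ∨ T e = (if ρ e then 1 else -1)) ∧ T ∈ M.FacialSubgroup

/-!
Two orientations ρ, σ differ exactly on the support of `diffFlow ρ σ`, and on that support
`diffFlow ρ σ` carries ρ's direction; so it is an oriented subgraph of ρ, 0-homologous
precisely when ρ and σ are homologous. Conversely, reversing a 0-homologous oriented
subgraph T of D₀ gives an orientation ρ with `diffFlow ρ D₀ = -T`. Homology of
orientations is transitive because `diffFlow ρ ρ' = diffFlow ρ D₀ - diffFlow ρ' D₀`.
-/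

section DiffFlow

variable {E : Type}

lemma diffFlow_self (ρ : E → Bool) : diffFlow ρ ρ = 0 := by
  funext x
  simp [diffFlow]

lemma diffFlow_eq_sub (ρ ρ' σ : E → Bool) :
    diffFlow ρ ρ' = diffFlow ρ σ - diffFlow ρ' σ := by
  funext x
  simp only [diffFlow, Pi.sub_apply]
  cases ρ x <;> cases ρ' x <;> cases σ x <;> simp

lemma diffFlow_apply_eq_zero_or (ρ σ : E → Bool) (x : E) :
    diffFlow ρ σ x = 0 ∨ diffFlow ρ σ x = (if ρ x then 1 else -1) := by
  simp only [diffFlow]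
  cases ρ x <;> cases σ x <;> simp

lemma diffFlow_apply_ne_zero {ρ σ : E → Bool} {x : E} (h : ρ x ≠ σ x) :
    diffFlow ρ σ x ≠ 0 := by
  simp only [diffFlow, if_neg h]
  cases ρ x <;> simp

def reverseOn (D : E → Bool) (T : E → ℤ) : E → Bool :=
  fun x => if T x = 0 then D x else !D x

lemma diffFlow_reverseOn {D : E → Bool} {T : E → ℤ}
    (hT : ∀ x, T x = 0 ∨ T x = (if D x then 1 else -1)) :
    diffFlow (reverseOn D T) D = -T := by
  funext x
  rcases hT x with h | h
  · simp [diffFlow, reverseOn, h]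
  · cases hD : D x <;> simp only [hD] at h <;> simp [diffFlow, reverseOn, hD, h]

lemma reverseOn_apply_ne {D : E → Bool} {T : E → ℤ} {x : E} (hx : T x ≠ 0) :
    reverseOn D T x ≠ D x := by
  simp [reverseOn, hx]

end DiffFlow

section ZeroHomSubgraph

variable {V E F : Type} [DecidableEq E] (M : SurfaceMap V E F)

lemma exists_zeroHomSubgraphOf_of_apply_ne {ρ σ : E → Bool}
    (hρσ : diffFlow ρ σ ∈ M.FacialSubgroup) {e : E} (he : ρ e ≠ σ e) :
    ∃ T : E → ℤ, ZeroHomSubgraphOf M ρ T ∧ T e ≠ 0 :=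
  ⟨diffFlow ρ σ, ⟨diffFlow_apply_eq_zero_or ρ σ, hρσ⟩, diffFlow_apply_ne_zero he⟩

lemma diffFlow_reverseOn_mem {D : E → Bool} {T : E → ℤ} (hT : ZeroHomSubgraphOf M D T) :
    diffFlow (reverseOn D T) D ∈ M.FacialSubgroup := by
  rw [diffFlow_reverseOn hT.1]
  exact neg_mem hT.2

end ZeroHomSubgraph

theorem nonrigid_tfae_general {V E F : Type} [DecidableEq E]
    (M : SurfaceMap V E F)
    (D0 : E → Bool) (e : E) :
    List.TFAE [
      NonRigid M D0 e,
      ∃ T : E → ℤ, ZeroHomSubgraphOf M D0 T ∧ T e ≠ 0,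
      ∀ ρ : E → Bool, diffFlow ρ D0 ∈ M.FacialSubgroup →
        ∃ T : E → ℤ, ZeroHomSubgraphOf M ρ T ∧ T e ≠ 0] := by
  tfae_have 1 → 3 := by
    rintro ⟨ρ', hρ', hρ'e⟩ ρ hρ
    by_cases he : ρ e = D0 e
    · have hρρ' : diffFlow ρ ρ' ∈ M.FacialSubgroup := by
        rw [diffFlow_eq_sub ρ ρ' D0]
        exact sub_mem hρ hρ'
      exact exists_zeroHomSubgraphOf_of_apply_ne M hρρ' (he ▸ Ne.symm hρ'e)
    · exact exists_zeroHomSubgraphOf_of_apply_ne M hρ he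
  tfae_have 3 → 2 := fun h3 => h3 D0 (by rw [diffFlow_self]; exact zero_mem _)
  tfae_have 2 → 1 := fun ⟨T, hT, hTe⟩ =>
    ⟨reverseOn D0 T, diffFlow_reverseOn_mem M hT, reverseOn_apply_ne hTe⟩
  tfae_finish

theorem nonrigid_tfae {V E F : Type} [Fintype E] [DecidableEq E] [DecidableEq F]
    (M : SurfaceMap V E F) (hM : M.GoodFacialWalks)
    (D0 : E → Bool) (e : E) :
    List.TFAE [
      NonRigid M D0 e,
      ∃ T : E → ℤ, ZeroHomSubgraphOf M D0 T ∧ T e ≠ 0,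
      ∀ ρ : E → Bool, diffFlow ρ D0 ∈ M.FacialSubgroup →
        ∃ T : E → ℤ, ZeroHomSubgraphOf M ρ T ∧ T e ≠ 0] :=
  nonrigid_tfae_general M D0 e
end
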